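/- For every positive integer m, the ratio of double factorials satisfies sqrt(2/(π(2m+1))) ≤ (2m-1)!!/(2m)!! ≤ 1/sqrt(2m+1). -/

import Mathlib

/-!
The Wallis partial product `W m = ∏_{i<m} (2i+2)² / ((2i+1)(2i+3))` telescopes to
`((2m)‼ / (2m-1)‼)² / (2m+1)`. Every factor exceeds `1`, and `W m ≤ π / 2` because
`∫₀^π sin ^ (2m+1) ≤ ∫₀^π sin ^ (2m)`; so the square of the ratio lies between `2 / (π (2m+1))`
and `1 / (2m+1)`.
-/

open Real
open scoped Nat

namespace Real.Wallis

theorem W_eq_doubleFactorial_ratio (k : ℕ) :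
    W k = (((2 * k)‼ : ℝ) / (2 * k - 1)‼) ^ 2 / (2 * k + 1) := by
  induction k with
  | zero => simp [W]
  | succ k ih =>
    have h_even : (2 * (k + 1))‼ = (2 * k + 2) * (2 * k)‼ := Nat.doubleFactorial_add_two _
    have h_odd : (2 * (k + 1) - 1)‼ = (2 * k + 1) * (2 * k - 1)‼ :=
      Nat.doubleFactorial_add_one (2 * k)
    rw [W_succ, ih, h_even, h_odd]
    have : ((2 * k - 1)‼ : ℝ) ≠ 0 := by positivity
    push_cast
    field_simp
    ring

theorem one_le_W (k : ℕ) : 1 ≤ W k := by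
  induction k with
  | zero => simp [W]
  | succ k ih =>
    have h_factor : (1 : ℝ) ≤ (2 * k + 2) / (2 * k + 1) * ((2 * k + 2) / (2 * k + 3)) := by
      rw [div_mul_div_comm, one_le_div (by positivity)]
      nlinarith
    rw [W_succ]
    exact one_le_mul_of_one_le_of_one_le ih h_factor

end Real.Wallis

theorem sq_doubleFactorial_ratio (k : ℕ) :
    (((2 * k - 1)‼ : ℝ) / (2 * k)‼) ^ 2 = ((2 * k + 1) * Wallis.W k)⁻¹ := by
  rw [Wallis.W_eq_doubleFactorial_ratio, mul_div_cancel₀ _ (by positivity), ← inv_pow, inv_div]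

theorem doubleFactorial_ratio_bounds (m : ℕ) :
    Real.sqrt (2 / (Real.pi * (2 * m + 1))) ≤
      (Nat.doubleFactorial (2 * m - 1) : ℝ) / (Nat.doubleFactorial (2 * m) : ℝ) ∧
    (Nat.doubleFactorial (2 * m - 1) : ℝ) / (Nat.doubleFactorial (2 * m) : ℝ) ≤
      1 / Real.sqrt (2 * m + 1) := by
  have h_sq := sq_doubleFactorial_ratio m
  have hW_pos := Wallis.W_pos m
  constructor
  · refine Real.sqrt_le_iff.mpr ⟨by positivity, h_sq ▸ ?_⟩
    calc 2 / (π * (2 * m + 1)) = ((2 * m + 1) * (π / 2))⁻¹ := by field_simp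
      _ ≤ ((2 * m + 1) * Wallis.W m)⁻¹ := by gcongr; exact Wallis.W_le m
  · rw [one_div, ← Real.sqrt_inv]
    exact Real.le_sqrt_of_sq_le (h_sq ▸ inv_anti₀ (by positivity)
      (le_mul_of_one_le_right (by positivity) (Wallis.one_le_W m)))
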